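/- Let X be a topological space, Y a convex set in a topological vector space, and Z a topological vector space. Let T ∈ KKM(Y,X) be compact and such that cl(T(A)) is compact for each compact subset A of Y. Let F : X × Z → 2^Z have nonempty values, let Q : Y → 2^Z, and let C : X → 2^Z be such that for each x ∈ X, C(x) is a pointed, closed, convex cone with int C(x) ≠ ∅. Define P : X → 2^Z by P(x) = {z ∈ Z : F(x,z) ⊆ −int C(x)} and G : Y → 2^X by G(y) = {x ∈ X : P(x) ∩ Q(y) = ∅}. Assume T is properly quasi-convex w.r.t. G. Then for each y ∈ Y there exists x* ∈ X such that F(x*,z) ⊄ −int C(x*) for each z ∈ Q(y). -/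

import Mathlib

open Set

/-- `G` is a generalized KKM mapping with respect to `T`: for every nonempty
finite subset `A` of `Y`, `⋃_{y ∈ co A} T(y) ⊆ ⋃_{a ∈ A} G(a)`. -/
def IsGenKKM {V X : Type*} [AddCommGroup V] [Module ℝ V]
    (Y : Set V) (T G : V → Set X) : Prop :=
  ∀ A : Finset V, A.Nonempty → (A : Set V) ⊆ Y →
    ∀ y ∈ convexHull ℝ (A : Set V), T y ⊆ ⋃ a ∈ A, G a

/-- `T ∈ KKM(Y,X)`: for every correspondence `G` that is a generalized KKM
mapping w.r.t. `T`, the family `{cl G(y) : y ∈ Y}` has the finite intersection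
property. -/
def HasKKMProperty {V X : Type*} [AddCommGroup V] [Module ℝ V] [TopologicalSpace X]
    (Y : Set V) (T : V → Set X) : Prop :=
  ∀ G : V → Set X, IsGenKKM Y T G →
    ∀ B : Finset V, B.Nonempty → (B : Set V) ⊆ Y →
      (⋂ y ∈ B, closure (G y)).Nonempty

/-! The quasi-convexity hypothesis makes `G` a generalized KKM mapping with respect to `T`, so
the KKM property of `T`, applied to the one-point family `{y}`, shows that `G y` is nonempty.
Any `x ∈ G y` is a solution, since `P x ∩ Q y = ∅` says exactly that no `z ∈ Q y` has
`F(x, z) ⊆ -int C(x)`. -/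

theorem Finset.exists_two_le_range_eq {V : Type*} {A : Finset V} (hA : A.Nonempty) :
    ∃ n, 2 ≤ n ∧ ∃ ys : Fin n → V, Set.range ys = A := by
  obtain ⟨a₀, ha₀⟩ := hA
  refine ⟨A.card + 2, by omega,
    Fin.cons a₀ (Fin.cons a₀ (Subtype.val ∘ A.equivFin.symm)), ?_⟩
  rw [Fin.range_cons, Fin.range_cons, A.equivFin.symm.surjective.range_comp, Subtype.range_coe,
    Set.insert_idem, Set.insert_eq_of_mem (Finset.mem_coe.mpr ha₀)]

section KKM

variable {V X : Type*} [AddCommGroup V] [Module ℝ V]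

def IsProperlyQuasiConvex (Y : Set V) (T G : V → Set X) : Prop :=
  ∀ n : ℕ, 2 ≤ n → ∀ ys : Fin n → V, (∀ i, ys i ∈ Y) →
    ∀ y ∈ convexHull ℝ (Set.range ys), ∃ i, T y ⊆ G (ys i)

theorem IsProperlyQuasiConvex.exists_mem_subset {Y : Set V} {T G : V → Set X}
    (hTG : IsProperlyQuasiConvex Y T G) {A : Finset V} (hA : A.Nonempty) (hAY : (A : Set V) ⊆ Y)
    {y : V} (hy : y ∈ convexHull ℝ (A : Set V)) : ∃ a ∈ A, T y ⊆ G a := by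
  obtain ⟨n, hn, ys, hys⟩ := Finset.exists_two_le_range_eq hA
  rw [← hys] at hAY hy
  obtain ⟨i, hi⟩ := hTG n hn ys (fun i => hAY ⟨i, rfl⟩) y hy
  exact ⟨ys i, by exact_mod_cast hys ▸ mem_range_self i, hi⟩

theorem IsProperlyQuasiConvex.isGenKKM {Y : Set V} {T G : V → Set X}
    (hTG : IsProperlyQuasiConvex Y T G) : IsGenKKM Y T G := by
  intro A hA hAY y hy
  obtain ⟨a, ha, hTa⟩ := hTG.exists_mem_subset hA hAY hy
  exact hTa.trans (subset_biUnion_of_mem ha)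

theorem HasKKMProperty.nonempty_of_isGenKKM [TopologicalSpace X] {Y : Set V} {T G : V → Set X}
    (hT : HasKKMProperty Y T) (hG : IsGenKKM Y T G) {y : V} (hy : y ∈ Y) : (G y).Nonempty := by
  have h := hT G hG {y} (Finset.singleton_nonempty y) (by simpa using hy)
  simp only [Finset.mem_singleton, iInter_iInter_eq_left] at h
  exact closure_nonempty_iff.mp h

end KKM

theorem statement10_general {X V Z : Type*} [TopologicalSpace X]
    [AddCommGroup V] [Module ℝ V]
    [AddCommGroup Z] [TopologicalSpace Z]
    (Y : Set V)
    (T : V → Set X)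
    (hTkkm : HasKKMProperty Y T)
    (F : X → Z → Set Z)
    (Q : V → Set Z)
    -- for each x, C(x) is a pointed closed convex cone with nonempty interior
    (C : X → Set Z)
    -- P(x) = {z ∈ Z : F(x,z) ⊆ -int C(x)},  G(y) = {x ∈ X : P(x) ∩ Q(y) = ∅}
    (P : X → Set Z) (hP : ∀ x, P x = {z : Z | F x z ⊆ -interior (C x)})
    (G : V → Set X) (hG : ∀ y, G y = {x : X | P x ∩ Q y = ∅})
    -- T is properly quasi-convex w.r.t. G
    (ha : ∀ n : ℕ, 2 ≤ n → ∀ ys : Fin n → V, (∀ i, ys i ∈ Y) →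
      ∀ y ∈ convexHull ℝ (Set.range ys), ∃ i, T y ⊆ G (ys i)) :
    ∀ y ∈ Y, ∃ x : X, ∀ z ∈ Q y, ¬ F x z ⊆ -interior (C x) := by
  intro y hy
  have hGKKM : IsGenKKM Y T G := IsProperlyQuasiConvex.isGenKKM ha
  obtain ⟨x, hx⟩ := hTkkm.nonempty_of_isGenKKM hGKKM hy
  rw [hG] at hx
  refine ⟨x, fun z hz hFz => ?_⟩
  have hPQ : z ∈ P x ∩ Q y := ⟨by rw [hP]; exact hFz, hz⟩
  rwa [hx] at hPQ

/-- Theorem 11: existence of solutions of a generalized vector equilibrium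
problem. -/
theorem statement10 {X V Z : Type*} [TopologicalSpace X]
    [AddCommGroup V] [Module ℝ V] [TopologicalSpace V]
    [IsTopologicalAddGroup V] [ContinuousSMul ℝ V]
    [AddCommGroup Z] [Module ℝ Z] [TopologicalSpace Z]
    [IsTopologicalAddGroup Z] [ContinuousSMul ℝ Z]
    (Y : Set V) (hYcv : Convex ℝ Y)
    (T : V → Set X)
    (hTkkm : HasKKMProperty Y T)
    (hTcp : IsCompact (closure (⋃ y ∈ Y, T y)))
    (hTA : ∀ A : Set V, A ⊆ Y → IsCompact A →
      IsCompact (closure (⋃ y ∈ A, T y)))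
    (F : X → Z → Set Z) (hFne : ∀ x z, (F x z).Nonempty)
    (Q : V → Set Z)
    -- for each x, C(x) is a pointed closed convex cone with nonempty interior
    (C : X → Set Z)
    (hCcl : ∀ x, IsClosed (C x)) (hCcv : ∀ x, Convex ℝ (C x))
    (hCcone : ∀ x, ∀ a : ℝ, 0 < a → ∀ z ∈ C x, a • z ∈ C x)
    (hCpt : ∀ x, C x ∩ -C x = {0})
    (hCint : ∀ x, (interior (C x)).Nonempty)
    -- P(x) = {z ∈ Z : F(x,z) ⊆ -int C(x)},  G(y) = {x ∈ X : P(x) ∩ Q(y) = ∅}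
    (P : X → Set Z) (hP : ∀ x, P x = {z : Z | F x z ⊆ -interior (C x)})
    (G : V → Set X) (hG : ∀ y, G y = {x : X | P x ∩ Q y = ∅})
    -- T is properly quasi-convex w.r.t. G
    (ha : ∀ n : ℕ, 2 ≤ n → ∀ ys : Fin n → V, (∀ i, ys i ∈ Y) →
      ∀ y ∈ convexHull ℝ (Set.range ys), ∃ i, T y ⊆ G (ys i)) :
    ∀ y ∈ Y, ∃ x : X, ∀ z ∈ Q y, ¬ F x z ⊆ -interior (C x) :=
  statement10_general Y T hTkkm F Q C P hP G hG ha
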